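/- (Translational symmetry of Pre for the LIP system.) Let A = e^{A_LIP Δt} and B = A_LIP⁻¹(e^{A_LIP Δt} − I) B_LIP be the discretized LIP matrices with ω = √(g/h). For the 2D-decoupled 4-state system, (A − I)ΔW = −B Δw, where Δw = (Δw₁, Δw₂) and ΔW = (Δw₁, 0, Δw₂, 0). Consequently A(x + ΔW) + B(u + Δw) = (A x + B u) + ΔW for all x, u. -/

import Mathlib

open Real Matrix

/-! A simultaneous shift of the CoP by Δw and of the positions by ΔW is an equilibrium
displacement: in each planar block the position column of `A - 1` is
`(cosh (ω dt) - 1, ω sinh (ω dt))`, which is exactly minus the corresponding column of `B`.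
Hence `(A - 1) ΔW = -B Δw`, and linearity of `x, u ↦ A x + B u` turns this into the
translation identity. -/

theorem mulVec_add_add_mulVec_add_eq_add {R m n : Type*} [Ring R] [Fintype m] [Fintype n]
    [DecidableEq m] {A : Matrix m m R} {B : Matrix m n R} {ΔW : m → R} {Δw : n → R}
    (h : (A - 1) *ᵥ ΔW = -(B *ᵥ Δw)) (x : m → R) (u : n → R) :
    A *ᵥ (x + ΔW) + B *ᵥ (u + Δw) = (A *ᵥ x + B *ᵥ u) + ΔW := by
  rw [sub_mulVec, one_mulVec, sub_eq_iff_eq_add] at h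
  rw [mulVec_add, mulVec_add, h]
  abel

namespace LIP

noncomputable def discreteA (ω dt : ℝ) : Matrix (Fin 4) (Fin 4) ℝ :=
  !![Real.cosh (ω * dt), Real.sinh (ω * dt) / ω, 0, 0;
     ω * Real.sinh (ω * dt), Real.cosh (ω * dt), 0, 0;
     0, 0, Real.cosh (ω * dt), Real.sinh (ω * dt) / ω;
     0, 0, ω * Real.sinh (ω * dt), Real.cosh (ω * dt)]

noncomputable def discreteB (ω dt : ℝ) : Matrix (Fin 4) (Fin 2) ℝ :=
  !![1 - Real.cosh (ω * dt), 0;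
     -(ω * Real.sinh (ω * dt)), 0;
     0, 1 - Real.cosh (ω * dt);
     0, -(ω * Real.sinh (ω * dt))]

/-- State coordinates are ordered `(p₁, ṗ₁, p₂, ṗ₂)`; a CoP shift moves only the positions. -/
def positionEmbedding : Matrix (Fin 4) (Fin 2) ℝ :=
  !![1, 0; 0, 0; 0, 1; 0, 0]

theorem positionEmbedding_mulVec (w : Fin 2 → ℝ) :
    positionEmbedding *ᵥ w = ![w 0, 0, w 1, 0] := by
  ext i; fin_cases i <;> simp [positionEmbedding, mulVec, dotProduct]

theorem discreteA_sub_one_mul_positionEmbedding (ω dt : ℝ) :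
    (discreteA ω dt - 1) * positionEmbedding = -discreteB ω dt := by
  ext i j
  fin_cases i <;> fin_cases j <;>
    simp [discreteA, discreteB, positionEmbedding, Matrix.mul_apply, Fin.sum_univ_succ,
      one_apply]

theorem discreteA_sub_one_mulVec (ω dt : ℝ) (w : Fin 2 → ℝ) :
    (discreteA ω dt - 1) *ᵥ ![w 0, 0, w 1, 0] = -(discreteB ω dt *ᵥ w) := by
  rw [← positionEmbedding_mulVec, mulVec_mulVec, discreteA_sub_one_mul_positionEmbedding,
    neg_mulVec]

end LIP

theorem lip_translation_symmetry_general (dt : ℝ)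
    (ω : ℝ)
    (A : Matrix (Fin 4) (Fin 4) ℝ)
    (hA : A = !![Real.cosh (ω * dt), Real.sinh (ω * dt) / ω, 0, 0;
                 ω * Real.sinh (ω * dt), Real.cosh (ω * dt), 0, 0;
                 0, 0, Real.cosh (ω * dt), Real.sinh (ω * dt) / ω;
                 0, 0, ω * Real.sinh (ω * dt), Real.cosh (ω * dt)])
    (B : Matrix (Fin 4) (Fin 2) ℝ)
    (hB : B = !![1 - Real.cosh (ω * dt), 0;
                 -(ω * Real.sinh (ω * dt)), 0;
                 0, 1 - Real.cosh (ω * dt);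
                 0, -(ω * Real.sinh (ω * dt))])
    (Δw : Fin 2 → ℝ) (ΔW : Fin 4 → ℝ)
    (hΔW : ΔW = ![Δw 0, 0, Δw 1, 0]) :
    (A - 1) *ᵥ ΔW = -(B *ᵥ Δw) ∧
      ∀ (x : Fin 4 → ℝ) (u : Fin 2 → ℝ),
        A *ᵥ (x + ΔW) + B *ᵥ (u + Δw) = (A *ᵥ x + B *ᵥ u) + ΔW := by
  have hfix : (A - 1) *ᵥ ΔW = -(B *ᵥ Δw) := by
    subst hA hB hΔW
    exact LIP.discreteA_sub_one_mulVec ω dt Δw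
  exact ⟨hfix, mulVec_add_add_mulVec_add_eq_add hfix⟩

/-- Translational symmetry of the discretized LIP dynamics:
(A − I)ΔW = −B Δw, hence A(x + ΔW) + B(u + Δw) = (A x + B u) + ΔW. -/
theorem lip_translation_symmetry (g h dt : ℝ) (hg : 0 < g) (hh : 0 < h)
    (ω : ℝ) (hω : ω = Real.sqrt (g / h))
    (A : Matrix (Fin 4) (Fin 4) ℝ)
    (hA : A = !![Real.cosh (ω * dt), Real.sinh (ω * dt) / ω, 0, 0;
                 ω * Real.sinh (ω * dt), Real.cosh (ω * dt), 0, 0;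
                 0, 0, Real.cosh (ω * dt), Real.sinh (ω * dt) / ω;
                 0, 0, ω * Real.sinh (ω * dt), Real.cosh (ω * dt)])
    (B : Matrix (Fin 4) (Fin 2) ℝ)
    (hB : B = !![1 - Real.cosh (ω * dt), 0;
                 -(ω * Real.sinh (ω * dt)), 0;
                 0, 1 - Real.cosh (ω * dt);
                 0, -(ω * Real.sinh (ω * dt))])
    (Δw : Fin 2 → ℝ) (ΔW : Fin 4 → ℝ)
    (hΔW : ΔW = ![Δw 0, 0, Δw 1, 0]) :
    (A - 1) *ᵥ ΔW = -(B *ᵥ Δw) ∧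
      ∀ (x : Fin 4 → ℝ) (u : Fin 2 → ℝ),
        A *ᵥ (x + ΔW) + B *ᵥ (u + Δw) = (A *ᵥ x + B *ᵥ u) + ΔW :=
  lip_translation_symmetry_general dt ω A hA B hB Δw ΔW hΔW
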